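/- arXiv:0807.1249 — 9 statements merged into one kernel-verified Lean document; each statement's English description precedes it below -/
import Mathlib

section
/- If Φ is a unique-sink orientation of the n-cube and F ⊆ [n], then the orientation Φ^(F) obtained by reversing all edges in coordinates belonging to F is also a unique-sink orientation. -/
/-- Flip coordinate `i` of a cube vertex. -/
def cflip {n : ℕ} (v : Fin n → Bool) (i : Fin n) : Fin n → Bool :=
  fun j => if j = i then !v j else v j

/-- `Φ v i = true` means the edge between `v` and `v ⊕ i` is incoming at `v` (sign `+`);
`Φ v i = false` means it is outgoing at `v` (sign `-`). Consistency says the two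
endpoints of an edge agree about its direction. -/
def Consistent {n : ℕ} (Φ : (Fin n → Bool) → Fin n → Bool) : Prop :=
  ∀ v i, Φ (cflip v i) i ≠ Φ v i

/-- `w` lies in the subcube spanned from `u` by the coordinate set `C`. -/
def InSubcube {n : ℕ} (u : Fin n → Bool) (C : Finset (Fin n)) (w : Fin n → Bool) : Prop :=
  ∀ j ∉ C, w j = u j

/-- Every (nonempty) subcube has a unique sink. -/
def HasUniqueSinks {n : ℕ} (Φ : (Fin n → Bool) → Fin n → Bool) : Prop :=
  ∀ (u : Fin n → Bool) (C : Finset (Fin n)),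
    ∃! w, InSubcube u C w ∧ ∀ i ∈ C, Φ w i = true

/-- A unique-sink orientation of the `n`-cube. -/
def IsUSO {n : ℕ} (Φ : (Fin n → Bool) → Fin n → Bool) : Prop :=
  Consistent Φ ∧ HasUniqueSinks Φ

/-- Directed edge relation of the orientation: `v → u`. -/
def Step {n : ℕ} (Φ : (Fin n → Bool) → Fin n → Bool) (v u : Fin n → Bool) : Prop :=
  ∃ i, Φ v i = false ∧ u = cflip v i

/-- Reversing all edges in the coordinate directions of `F`. -/
def reverseIn {n : ℕ} (F : Finset (Fin n)) (Φ : (Fin n → Bool) → Fin n → Bool) :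
    (Fin n → Bool) → Fin n → Bool :=
  fun v i => if i ∈ F then !(Φ v i) else Φ v i

lemma insubcube_facet {n : ℕ} {u w : Fin n → Bool} {C : Finset (Fin n)} {i : Fin n}
    (hi : i ∈ C) (hw : InSubcube u C w) :
    InSubcube (Function.update u i (w i)) (C.erase i) w := by
  intro j hj
  by_cases hji : j = i
  · subst hji; simp
  · have hjC : j ∉ C := fun hC => hj (Finset.mem_erase.mpr ⟨hji, hC⟩)
    rw [Function.update_of_ne hji]
    exact hw j hjC

lemma uso_reverse_single {n : ℕ} (Φ : (Fin n → Bool) → Fin n → Bool) (i : Fin n)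
    (h : IsUSO Φ) : IsUSO (reverseIn {i} Φ) := by
  obtain ⟨hc, hs⟩ := h
  constructor
  · intro v j
    simp only [reverseIn]
    by_cases hj : j ∈ ({i} : Finset (Fin n))
    · simp only [if_pos hj]
      intro e
      exact hc v j (by simpa using congrArg (fun b => !b) e)
    · simp only [if_neg hj]
      exact hc v j
  · intro u C
    by_cases hiC : i ∈ C
    · -- facet sinks
      obtain ⟨s0, ⟨hs0in, hs0sink⟩, hs0uniq⟩ := hs (Function.update u i false) (C.erase i)
      obtain ⟨s1, ⟨hs1in, hs1sink⟩, hs1uniq⟩ := hs (Function.update u i true) (C.erase i)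
      have hs0i : s0 i = false := by
        have := hs0in i (Finset.notMem_erase i C); simpa using this
      have hs1i : s1 i = true := by
        have := hs1in i (Finset.notMem_erase i C); simpa using this
      have hne : i ∈ C → ∀ j ∉ C, j ≠ i := fun h1 j h2 e => h2 (e ▸ h1)
      have hs0inC : InSubcube u C s0 := by
        intro j hj
        have hji : j ≠ i := hne hiC j hj
        have hj' : j ∉ C.erase i := fun hh => hj (Finset.mem_of_mem_erase hh)
        rw [hs0in j hj', Function.update_of_ne hji]
      have hs1inC : InSubcube u C s1 := by
        intro j hj
        have hji : j ≠ i := hne hiC j hj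
        have hj' : j ∉ C.erase i := fun hh => hj (Finset.mem_of_mem_erase hh)
        rw [hs1in j hj', Function.update_of_ne hji]
      -- any facet sink equals s0 or s1 according to its i-coordinate
      have key : ∀ w, InSubcube u C w → (∀ j ∈ C.erase i, Φ w j = true) →
          (w i = false → w = s0) ∧ (w i = true → w = s1) := by
        intro w hw hsk
        have hf := insubcube_facet hiC hw
        constructor
        · intro hwi; rw [hwi] at hf; exact hs0uniq w ⟨hf, hsk⟩
        · intro hwi; rw [hwi] at hf; exact hs1uniq w ⟨hf, hsk⟩
      -- the global sink of (u, C) in Φ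
      obtain ⟨t, ⟨htin, htsink⟩, htuniq⟩ := hs u C
      have hti : Φ t i = true := htsink i hiC
      have htkey := key t htin (fun j hj => htsink j (Finset.mem_of_mem_erase hj))
      -- a vertex that is a facet sink with Φ · i = true equals t
      have glob : ∀ w, InSubcube u C w → (∀ j ∈ C.erase i, Φ w j = true) →
          Φ w i = true → w = t := by
        intro w hw hsk hwi
        refine htuniq w ⟨hw, fun j hj => ?_⟩
        by_cases hji : j = i
        · subst hji; exact hwi
        · exact hsk j (Finset.mem_erase.mpr ⟨hji, hj⟩)
      -- the reversed-orientation sink condition on (u, C)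
      have revsink : ∀ w, (∀ j ∈ C, reverseIn {i} Φ w j = true) ↔
          ((∀ j ∈ C.erase i, Φ w j = true) ∧ Φ w i = false) := by
        intro w
        constructor
        · intro hw
          constructor
          · intro j hj
            obtain ⟨hji, hjC⟩ := Finset.mem_erase.mp hj
            have := hw j hjC
            simpa only [reverseIn, Finset.mem_singleton, if_neg hji] using this
          · have := hw i hiC
            simp only [reverseIn, Finset.mem_singleton, if_pos rfl] at this
            simpa using this
        · rintro ⟨h1, h2⟩ j hj
          by_cases hji : j = i
          · subst hji
            simp only [reverseIn, Finset.mem_singleton, if_pos rfl, h2]; rfl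
          · simp only [reverseIn, Finset.mem_singleton, if_neg hji]
            exact h1 j (Finset.mem_erase.mpr ⟨hji, hj⟩)
      cases ht : t i with
      | true =>
        have hts1 : t = s1 := htkey.2 ht
        have hΦs1 : Φ s1 i = true := hts1 ▸ hti
        have hΦs0 : Φ s0 i = false := by
          by_contra hcon
          rw [Bool.not_eq_false] at hcon
          have heq := glob s0 hs0inC hs0sink hcon
          rw [heq, hts1, hs1i] at hs0i
          simp at hs0i
        refine ⟨s0, ⟨hs0inC, (revsink s0).mpr ⟨hs0sink, hΦs0⟩⟩, ?_⟩
        rintro w ⟨hwin, hwsink⟩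
        obtain ⟨hw1, hw2⟩ := (revsink w).mp hwsink
        cases hwi : w i with
        | false => exact (key w hwin hw1).1 hwi
        | true =>
          have := (key w hwin hw1).2 hwi
          rw [this, hΦs1] at hw2; simp at hw2
      | false =>
        have hts0 : t = s0 := htkey.1 ht
        have hΦs0 : Φ s0 i = true := hts0 ▸ hti
        have hΦs1 : Φ s1 i = false := by
          by_contra hcon
          rw [Bool.not_eq_false] at hcon
          have heq := glob s1 hs1inC hs1sink hcon
          rw [heq, hts0, hs0i] at hs1i
          simp at hs1i
        refine ⟨s1, ⟨hs1inC, (revsink s1).mpr ⟨hs1sink, hΦs1⟩⟩, ?_⟩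
        rintro w ⟨hwin, hwsink⟩
        obtain ⟨hw1, hw2⟩ := (revsink w).mp hwsink
        cases hwi : w i with
        | true => exact (key w hwin hw1).2 hwi
        | false =>
          have := (key w hwin hw1).1 hwi
          rw [this, hΦs0] at hw2; simp at hw2
    · -- i ∉ C : unchanged on C
      obtain ⟨t, ⟨h1, h2⟩, h3⟩ := hs u C
      have hne : ∀ j ∈ C, j ≠ i := fun j hj e => hiC (e ▸ hj)
      refine ⟨t, ⟨h1, fun j hj => ?_⟩, ?_⟩
      · simp only [reverseIn, Finset.mem_singleton, if_neg (hne j hj)]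
        exact h2 j hj
      · rintro w ⟨hw1, hw2⟩
        refine h3 w ⟨hw1, fun j hj => ?_⟩
        have := hw2 j hj
        simpa only [reverseIn, Finset.mem_singleton, if_neg (hne j hj)] using this

/-- if `Φ` is a USO, then so is `Φ^(F)` for any `F ⊆ [n]`. -/
theorem uso_reverse {n : ℕ} (Φ : (Fin n → Bool) → Fin n → Bool) (F : Finset (Fin n))
    (h : IsUSO Φ) : IsUSO (reverseIn F Φ) := by
  induction F using Finset.induction_on with
  | empty =>
    have he : reverseIn (∅ : Finset (Fin n)) Φ = Φ := by
      funext v i; simp [reverseIn]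
    rwa [he]
  | @insert a s ha ih =>
    have heq : reverseIn (insert a s) Φ = reverseIn {a} (reverseIn s Φ) := by
      funext v i
      by_cases hia : i = a
      · subst hia
        simp [reverseIn, ha]
      · by_cases his : i ∈ s <;> simp [reverseIn, hia, his]
    rw [heq]
    exact uso_reverse_single _ a ih
end

section
/- An orientation Φ of the n-cube is a unique-sink orientation if and only if it has the unique-completion property: for every partition [n] = A ∪ B and every pair of maps α : A → {0,1}, β : B → {-,+}, there is a unique vertex v such that v_i = α(i) for all i ∈ A and Φ(v)_i = β(i) for all i ∈ B. -/
/-- Reverse all edges in the dimensions belonging to `S`. -/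
def flipS {n : ℕ} (S : Finset (Fin n)) (Φ : (Fin n → Bool) → Fin n → Bool) :
    (Fin n → Bool) → Fin n → Bool :=
  fun v i => if i ∈ S then !Φ v i else Φ v i

/-- Reversing all edges of a single dimension preserves the unique-sink property. -/
lemma flip_one_sinks {n : ℕ} (Φ : (Fin n → Bool) → Fin n → Bool) (i0 : Fin n)
    (h : HasUniqueSinks Φ) :
    HasUniqueSinks (fun v i => if i = i0 then !Φ v i else Φ v i) := by
  intro u C
  by_cases hi : i0 ∈ C
  · set C' := C.erase i0 with hC'
    have hC'sub : ∀ i ∈ C', i ∈ C := fun i hi' => Finset.mem_of_mem_erase hi'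
    have hi0C' : i0 ∉ C' := Finset.notMem_erase i0 C
    obtain ⟨s0, ⟨hs0in, hs0sink⟩, hs0uniq⟩ := h u C'
    obtain ⟨s1, ⟨hs1in, hs1sink⟩, hs1uniq⟩ := h (cflip u i0) C'
    obtain ⟨w, ⟨hwin, hwsink⟩, hwuniq⟩ := h u C
    have hs0i0 : s0 i0 = u i0 := hs0in i0 hi0C'
    have hs1i0 : s1 i0 = !u i0 := by
      have := hs1in i0 hi0C'
      simpa [cflip] using this
    have hne : s0 ≠ s1 := by
      intro he
      have h2 : s0 i0 = s1 i0 := by rw [he]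
      rw [hs0i0, hs1i0] at h2
      cases u i0 <;> simp at h2
    -- any C'-sink of the big subcube is s0 or s1
    have key : ∀ x, InSubcube u C x → (∀ i ∈ C', Φ x i = true) → x = s0 ∨ x = s1 := by
      intro x hx hsx
      by_cases h0 : x i0 = u i0
      · left
        apply hs0uniq
        refine ⟨?_, hsx⟩
        intro j hj
        by_cases hji : j = i0
        · subst hji; exact h0
        · exact hx j (fun hjC => hj (Finset.mem_erase.mpr ⟨hji, hjC⟩))
      · right
        apply hs1uniq
        refine ⟨?_, hsx⟩
        intro j hj
        by_cases hji : j = i0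
        · subst hji
          simp only [cflip, if_pos rfl]
          cases hx0 : x j <;> cases hu0 : u j <;> simp [hx0, hu0] at h0 ⊢
        · have hjC : j ∉ C := fun hjC => hj (Finset.mem_erase.mpr ⟨hji, hjC⟩)
          rw [hx j hjC]
          simp [cflip, hji]
    -- w is s0 or s1
    have hw01 : w = s0 ∨ w = s1 :=
      key w hwin (fun i hi' => hwsink i (hC'sub i hi'))
    have hwi0 : Φ w i0 = true := hwsink i0 hi
    -- s0 and s1 are in the big subcube
    have hs0inC : InSubcube u C s0 := fun j hj => hs0in j (fun h' => hj (hC'sub j h'))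
    have hs1inC : InSubcube u C s1 := by
      intro j hj
      have hji : j ≠ i0 := fun he => hj (he ▸ hi)
      have := hs1in j (fun h' => hj (hC'sub j h'))
      simpa [cflip, hji] using this
    -- if a facet sink has Φ · i0 = true, it is the global sink w
    have glob : ∀ x, InSubcube u C x → (∀ i ∈ C', Φ x i = true) → Φ x i0 = true → x = w := by
      intro x hx hsx hx0
      apply hwuniq
      refine ⟨hx, ?_⟩
      intro i hiC
      by_cases hii : i = i0
      · subst hii; exact hx0
      · exact hsx i (Finset.mem_erase.mpr ⟨hii, hiC⟩)
    rcases hw01 with hw | hw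
    · -- w = s0, so Φ s1 i0 = false and s1 is the unique flipped sink
      have hs1f : Φ s1 i0 = false := by
        cases hval : Φ s1 i0
        · rfl
        · exfalso
          have := glob s1 hs1inC hs1sink hval
          exact hne (by rw [← hw, this])
      refine ⟨s1, ⟨hs1inC, ?_⟩, ?_⟩
      · intro i hiC
        by_cases hii : i = i0
        · subst hii; simp [hs1f]
        · simp only [if_neg hii]
          exact hs1sink i (Finset.mem_erase.mpr ⟨hii, hiC⟩)
      · intro x ⟨hx, hxs⟩
        have hsx : ∀ i ∈ C', Φ x i = true := by
          intro i hi'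
          have := hxs i (hC'sub i hi')
          have hii : i ≠ i0 := (Finset.mem_erase.mp hi').1
          simpa [hii] using this
        have hx0 : Φ x i0 = false := by
          have := hxs i0 hi
          simpa using this
        rcases key x hx hsx with hx' | hx'
        · exfalso
          rw [hx'] at hx0
          have h3 : Φ s0 i0 = true := hw ▸ hwi0
          rw [h3] at hx0
          exact Bool.noConfusion hx0
        · exact hx'
    · -- w = s1, so Φ s0 i0 = false and s0 is the unique flipped sink
      have hs0f : Φ s0 i0 = false := by
        cases hval : Φ s0 i0
        · rfl
        · exfalso
          have := glob s0 hs0inC hs0sink hval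
          exact hne (by rw [← hw, this])
      refine ⟨s0, ⟨hs0inC, ?_⟩, ?_⟩
      · intro i hiC
        by_cases hii : i = i0
        · subst hii; simp [hs0f]
        · simp only [if_neg hii]
          exact hs0sink i (Finset.mem_erase.mpr ⟨hii, hiC⟩)
      · intro x ⟨hx, hxs⟩
        have hsx : ∀ i ∈ C', Φ x i = true := by
          intro i hi'
          have := hxs i (hC'sub i hi')
          have hii : i ≠ i0 := (Finset.mem_erase.mp hi').1
          simpa [hii] using this
        have hx0 : Φ x i0 = false := by
          have := hxs i0 hi
          simpa using this
        rcases key x hx hsx with hx' | hx'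
        · exact hx'
        · exfalso
          rw [hx'] at hx0
          have h3 : Φ s1 i0 = true := hw ▸ hwi0
          rw [h3] at hx0
          exact Bool.noConfusion hx0
  · -- i0 ∉ C: same sinks
    have := h u C
    apply existsUnique_congr (fun w => ?_) |>.mp this
    constructor
    · rintro ⟨h1, h2⟩
      refine ⟨h1, ?_⟩
      intro i hiC
      have hii : i ≠ i0 := fun he => hi (he ▸ hiC)
      simpa [hii] using h2 i hiC
    · rintro ⟨h1, h2⟩
      refine ⟨h1, ?_⟩
      intro i hiC
      have hii : i ≠ i0 := fun he => hi (he ▸ hiC)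
      have := h2 i hiC
      simpa [hii] using this

/-- Reversing any set of dimensions preserves the unique-sink property. -/
lemma flipS_sinks {n : ℕ} (Φ : (Fin n → Bool) → Fin n → Bool)
    (h : HasUniqueSinks Φ) (S : Finset (Fin n)) :
    HasUniqueSinks (flipS S Φ) := by
  induction S using Finset.induction with
  | empty =>
      have he : flipS (∅ : Finset (Fin n)) Φ = Φ := by
        funext v i; simp [flipS]
      rw [he]; exact h
  | @insert a S ha ih =>
      have he : flipS (insert a S) Φ
          = fun v i => if i = a then !(flipS S Φ v i) else flipS S Φ v i := by
        funext v i
        by_cases hia : i = a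
        · subst hia
          simp [flipS, ha]
        · simp [flipS, Finset.mem_insert, hia]
      rw [he]
      exact flip_one_sinks (flipS S Φ) a ih

/-- an orientation of the `n`-cube is a USO iff it has the
unique-completion property: prescribing the bits on a set `A` of coordinates
(via `α`) and the edge signs on the complementary set (via `β`) determines a
unique vertex. -/
theorem uso_iff_unique_completion {n : ℕ} (Φ : (Fin n → Bool) → Fin n → Bool)
    (hc : Consistent Φ) :
    HasUniqueSinks Φ ↔
      ∀ (A : Finset (Fin n)) (α : Fin n → Bool) (β : Fin n → Bool),
        ∃! v : Fin n → Bool,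
          (∀ i ∈ A, v i = α i) ∧ (∀ i ∉ A, Φ v i = β i) := by
  constructor
  · intro h A α β
    set S : Finset (Fin n) := Finset.univ.filter (fun i => β i = false) with hS
    have hmem : ∀ i, i ∈ S ↔ β i = false := by
      intro i; simp [hS]
    have hΨ := flipS_sinks Φ h S α Aᶜ
    apply existsUnique_congr (fun x => ?_) |>.mp hΨ
    constructor
    · rintro ⟨h1, h2⟩
      constructor
      · intro i hiA
        exact h1 i (by simpa using hiA)
      · intro i hiA
        have := h2 i (by simpa using hiA)
        simp only [flipS] at this
        by_cases hb : β i = false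
        · rw [if_pos ((hmem i).mpr hb)] at this
          rw [hb]
          cases hval : Φ x i
          · rfl
          · rw [hval] at this; simp at this
        · have hb' : β i = true := by revert hb; cases β i <;> simp
          rw [if_neg (fun hm => hb ((hmem i).mp hm))] at this
          rw [hb']; exact this
    · rintro ⟨h1, h2⟩
      constructor
      · intro j hj
        exact h1 j (by simpa using hj)
      · intro i hiA
        have hiA' : i ∉ A := by simpa using hiA
        have := h2 i hiA'
        simp only [flipS]
        by_cases hb : β i = false
        · rw [if_pos ((hmem i).mpr hb), this, hb]; rfl
        · have hb' : β i = true := by revert hb; cases β i <;> simp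
          rw [if_neg (fun hm => hb ((hmem i).mp hm)), this]
          exact hb'
  · intro h u C
    have := h Cᶜ u (fun _ => true)
    apply existsUnique_congr (fun w => ?_) |>.mp this
    constructor
    · rintro ⟨h1, h2⟩
      exact ⟨fun j hj => h1 j (by simpa using hj), fun i hiC => h2 i (by simpa using hiC)⟩
    · rintro ⟨h1, h2⟩
      exact ⟨fun j hj => h1 j (by simpa using hj), fun i hiC => h2 i (by simpa using hiC)⟩
end

section
/- In a unique-sink orientation of the n-cube, every nonempty subcube has a unique source. -/
open Finset

section Aux
open scoped Classical

variable {n : ℕ} {Φ : (Fin n → Bool) → Fin n → Bool}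

noncomputable def sinkOf (hU : HasUniqueSinks Φ) (w : Fin n → Bool) (S : Finset (Fin n)) :
    Fin n → Bool := (hU w S).choose

lemma sinkOf_spec (hU : HasUniqueSinks Φ) (w : Fin n → Bool) (S : Finset (Fin n)) :
    InSubcube w S (sinkOf hU w S) ∧ ∀ i ∈ S, Φ (sinkOf hU w S) i = true :=
  (hU w S).choose_spec.1

lemma sinkOf_unique (hU : HasUniqueSinks Φ) (w : Fin n → Bool) (S : Finset (Fin n))
    {v : Fin n → Bool} (hv : InSubcube w S v ∧ ∀ i ∈ S, Φ v i = true) :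
    v = sinkOf hU w S :=
  (hU w S).choose_spec.2 v hv

lemma cube_card (u : Fin n → Bool) (D : Finset (Fin n)) :
    (univ.filter (fun v => InSubcube u D v)).card = 2 ^ D.card := by
  rw [← Fintype.card_subtype]
  have e : {v // InSubcube u D v} ≃ (D → Bool) :=
    { toFun := fun v j => v.1 j
      invFun := fun g => ⟨fun j => if h : j ∈ D then g ⟨j, h⟩ else u j, by
        intro j hj; simp [dif_neg hj]⟩
      left_inv := fun v => by
        ext j
        by_cases h : j ∈ D
        · simp [dif_pos h]
        · simp [dif_neg h, v.2 j h]
      right_inv := fun g => by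
        funext j
        simp }
  rw [Fintype.card_congr e]
  simp [Fintype.card_fun]

lemma sink_count (hU : HasUniqueSinks Φ) (u : Fin n → Bool) {C S : Finset (Fin n)}
    (hS : S ⊆ C) :
    (univ.filter (fun v => InSubcube u C v ∧ ∀ i ∈ S, Φ v i = true)).card
      = 2 ^ (C \ S).card := by
  rw [← cube_card u (C \ S)]
  apply Finset.card_bij' (fun v _ => fun k => if k ∈ S then u k else v k)
      (fun w _ => sinkOf hU w S)
  · -- hi : maps into cube(u, C \ S)
    intro v hv
    rw [mem_filter] at hv ⊢
    refine ⟨mem_univ _, fun k hk => ?_⟩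
    by_cases h : k ∈ S
    · simp [h]
    · simp [h]
      exact hv.2.1 k (fun hkC => hk (mem_sdiff.2 ⟨hkC, h⟩))
  · -- hj : sink maps into target
    intro w hw
    rw [mem_filter] at hw ⊢
    refine ⟨mem_univ _, fun k hk => ?_, (sinkOf_spec hU w S).2⟩
    have hkS : k ∉ S := fun hkS => hk (hS hkS)
    rw [(sinkOf_spec hU w S).1 k hkS, hw.2 k (fun hks => hk (mem_sdiff.1 hks).1)]
  · -- left inverse : sink (override v) = v
    intro v hv
    rw [mem_filter] at hv
    refine (sinkOf_unique hU _ S ⟨fun k hk => ?_, hv.2.2⟩).symm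
    simp [hk]
  · -- right inverse : override (sink w) = w
    intro w hw
    rw [mem_filter] at hw
    funext k
    by_cases h : k ∈ S
    · simp [h]
      exact (hw.2 k (fun hks => (mem_sdiff.1 hks).2 h)).symm
    · simp [h]
      exact (sinkOf_spec hU w S).1 k h

lemma vertex_identity (C : Finset (Fin n)) (v : Fin n → Bool) :
    ((if ∀ i ∈ C, Φ v i = false then 1 else 0 : ℤ)) =
    ∑ S ∈ C.powerset, (-1 : ℤ) ^ S.card * (if ∀ i ∈ S, Φ v i = true then 1 else 0) := by
  set T := C.filter (fun i => Φ v i = true) with hT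
  have hTC : T ⊆ C := filter_subset _ _
  have h1 : ∀ S ∈ C.powerset,
      (-1:ℤ)^S.card * (if ∀ i ∈ S, Φ v i = true then 1 else 0)
        = if S ⊆ T then (-1:ℤ)^S.card else 0 := by
    intro S hS
    by_cases hcond : ∀ i ∈ S, Φ v i = true
    · have hsub : S ⊆ T := fun i hi => mem_filter.2 ⟨mem_powerset.1 hS hi, hcond i hi⟩
      rw [if_pos hcond, if_pos hsub, mul_one]
    · rw [if_neg hcond, if_neg, mul_zero]
      intro hsub
      exact hcond fun i hi => (mem_filter.1 (hsub hi)).2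
  rw [Finset.sum_congr rfl h1, ← Finset.sum_filter]
  have h2 : C.powerset.filter (fun S => S ⊆ T) = T.powerset := by
    ext S
    simp only [mem_filter, mem_powerset]
    exact ⟨fun h => h.2, fun h => ⟨h.trans hTC, h⟩⟩
  rw [h2, Finset.sum_powerset_neg_one_pow_card]
  congr 1
  rw [eq_iff_iff, hT, filter_eq_empty_iff]
  simp [Bool.not_eq_true]

lemma alt_sum (C : Finset (Fin n)) :
    ∑ S ∈ C.powerset, (-1:ℤ)^S.card * 2 ^ (C \ S).card = 1 := by
  have h := Finset.prod_add (fun _ : Fin n => (-1:ℤ)) (fun _ => 2) C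
  simp only [prod_const] at h
  norm_num at h
  rw [← h]

end Aux

section Main
open scoped Classical
variable {n : ℕ}

theorem uso_unique_source' (Φ : (Fin n → Bool) → Fin n → Bool)
    (hU : HasUniqueSinks Φ) (u : Fin n → Bool) (C : Finset (Fin n)) :
    ∃! w, InSubcube u C w ∧ ∀ i ∈ C, Φ w i = false := by
  set T := univ.filter (fun v => InSubcube u C v ∧ ∀ i ∈ C, Φ v i = false) with hTdef
  have hcard : T.card = 1 := by
    have key : (T.card : ℤ) = 1 := by
      calc (T.card : ℤ)
          = ∑ v ∈ univ.filter (fun v => InSubcube u C v),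
              (if ∀ i ∈ C, Φ v i = false then (1:ℤ) else 0) := by
            rw [hTdef, show (univ.filter (fun v => InSubcube u C v ∧ ∀ i ∈ C, Φ v i = false))
                = (univ.filter (fun v => InSubcube u C v)).filter
                    (fun v => ∀ i ∈ C, Φ v i = false) from by rw [filter_filter],
              Finset.card_filter]
            push_cast
            rfl
        _ = ∑ v ∈ univ.filter (fun v => InSubcube u C v),
              ∑ S ∈ C.powerset, (-1:ℤ)^S.card * (if ∀ i ∈ S, Φ v i = true then 1 else 0) :=
            Finset.sum_congr rfl fun v _ => vertex_identity C v
        _ = ∑ S ∈ C.powerset,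
              ∑ v ∈ univ.filter (fun v => InSubcube u C v),
                (-1:ℤ)^S.card * (if ∀ i ∈ S, Φ v i = true then 1 else 0) :=
            Finset.sum_comm
        _ = ∑ S ∈ C.powerset, (-1:ℤ)^S.card * 2 ^ (C \ S).card := by
            refine Finset.sum_congr rfl fun S hS => ?_
            rw [← Finset.mul_sum]
            congr 1
            have hcf : (∑ v ∈ univ.filter (fun v => InSubcube u C v),
                (if ∀ i ∈ S, Φ v i = true then (1:ℤ) else 0))
                = ((((univ.filter (fun v => InSubcube u C v)).filter
                    (fun v => ∀ i ∈ S, Φ v i = true)).card : ℤ)) := by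
              rw [Finset.card_filter]; push_cast; rfl
            rw [hcf, filter_filter, sink_count hU u (mem_powerset.1 hS)]
            push_cast
            rfl
        _ = 1 := alt_sum C
    exact_mod_cast key
  obtain ⟨a, ha⟩ := Finset.card_eq_one.1 hcard
  have haT : a ∈ T := ha ▸ mem_singleton_self a
  rw [hTdef, mem_filter] at haT
  refine ⟨a, haT.2, fun w hw => ?_⟩
  have : w ∈ T := by rw [hTdef, mem_filter]; exact ⟨mem_univ _, hw⟩
  rw [ha, mem_singleton] at this
  exact this

end Main


/-- in a USO of the `n`-cube, every nonempty subcube has a unique source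
(a vertex all of whose edges within the subcube are outgoing). -/
theorem uso_unique_source {n : ℕ} (Φ : (Fin n → Bool) → Fin n → Bool)
    (h : IsUSO Φ) (u : Fin n → Bool) (C : Finset (Fin n)) :
    ∃! w, InSubcube u C w ∧ ∀ i ∈ C, Φ w i = false :=
  uso_unique_source' Φ h.2 u C
end

section
/- Let Φ be a unique-sink orientation of the n-cube with global sink t, and let v be any vertex at Hamming distance k from t. Then Φ contains a directed path of length exactly k from v to t. -/
/-!
Walk greedily towards the sink. If `v ≠ t`, the subcube spanned from `t` by the coordinates
where `v` and `t` differ contains `v`; its unique sink is `t`, so `v` has an outgoing edge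
inside it. Following that edge fixes one differing coordinate, so the Hamming distance to `t`
drops by exactly one at every step.
-/

theorem exists_path_of_descent {α : Type*} (r : α → α → Prop) (d : α → ℕ) (t : α)
    (hd : ∀ v, d v = 0 → v = t) (hstep : ∀ v, d v ≠ 0 → ∃ u, r v u ∧ d u + 1 = d v) (v : α) :
    ∃ p : ℕ → α, p 0 = v ∧ p (d v) = t ∧ ∀ m < d v, r (p m) (p (m + 1)) := by
  obtain ⟨k, hk⟩ : ∃ k, d v = k := ⟨_, rfl⟩
  induction k generalizing v with
  | zero => exact ⟨fun _ => v, rfl, by rw [hk]; exact hd v hk, by omega⟩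
  | succ k ih =>
    obtain ⟨u, hvu, hdu⟩ := hstep v (by omega)
    have hduk : d u = k := by omega
    obtain ⟨p, hp0, hpt, hp⟩ := ih u hduk
    rw [hduk] at hpt hp
    refine ⟨fun | 0 => v | m + 1 => p m, rfl, by rw [hk]; exact hpt, ?_⟩
    rintro (_ | m) hm
    · simpa [hp0] using hvu
    · exact hp m (by omega)

theorem hammingDist_update_add_one {ι : Type*} [Fintype ι] [DecidableEq ι] {β : ι → Type*}
    [∀ i, DecidableEq (β i)] {x y : ∀ i, β i} {i : ι} (hi : x i ≠ y i) :
    hammingDist (Function.update x i (y i)) y + 1 = hammingDist x y := by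
  have hfilter : ({j | Function.update x i (y i) j ≠ y j} : Finset ι) =
      ({j | x j ≠ y j} : Finset ι).erase i := by
    ext j
    by_cases hj : j = i
    · subst hj; simp
    · simp [hj]
  rw [hammingDist, hammingDist, hfilter, Finset.card_erase_add_one (by simpa using hi)]

theorem cflip_eq_update_of_ne {n : ℕ} {v t : Fin n → Bool} {i : Fin n} (hi : v i ≠ t i) :
    cflip v i = Function.update v i (t i) := by
  ext j
  by_cases hj : j = i
  · subst hj; simpa [cflip, Bool.eq_not_iff] using hi
  · simp [cflip, hj]

theorem HasUniqueSinks.exists_outgoing_of_ne_sink {n : ℕ} {Φ : (Fin n → Bool) → Fin n → Bool}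
    (h : HasUniqueSinks Φ) {t : Fin n → Bool} (ht : ∀ i, Φ t i = true) {v : Fin n → Bool}
    (hv : v ≠ t) : ∃ i, v i ≠ t i ∧ Φ v i = false := by
  by_contra! hin
  refine hv ((h t {i | v i ≠ t i}).unique ⟨?_, ?_⟩ ⟨fun _ _ => rfl, fun i _ => ht i⟩)
  · intro j hj
    simpa using hj
  · intro i hi
    simpa using hin i (by simpa using hi)

/-- in a USO with global sink `t`, from any vertex `v` at Hamming
distance `k` from `t` there is a directed path of length exactly `k` to `t`. -/
theorem uso_short_path_to_sink {n : ℕ} (Φ : (Fin n → Bool) → Fin n → Bool)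
    (h : IsUSO Φ) (t : Fin n → Bool) (ht : ∀ i, Φ t i = true)
    (v : Fin n → Bool) (k : ℕ)
    (hk : k = (Finset.univ.filter (fun i => v i ≠ t i)).card) :
    ∃ p : ℕ → (Fin n → Bool),
      p 0 = v ∧ p k = t ∧ ∀ m < k, Step Φ (p m) (p (m + 1)) := by
  obtain rfl : k = hammingDist v t := hk
  refine exists_path_of_descent (Step Φ) (hammingDist · t) t
    (fun _ => eq_of_hammingDist_eq_zero) (fun u hu => ?_) v
  obtain ⟨i, hit, hout⟩ := h.2.exists_outgoing_of_ne_sink ht (hammingDist_ne_zero.mp hu)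
  refine ⟨cflip u i, ⟨i, hout, rfl⟩, ?_⟩
  rw [cflip_eq_update_of_ne hit]
  exact hammingDist_update_add_one hit
end

section
/- Algorithm SimplePrincipalPivoting with Murty's least-index rule terminates on any unique-sink orientation of the n-cube: starting from any vertex and repeatedly flipping the smallest coordinate i with an outgoing edge v → v⊕i, the global sink is reached after finitely many steps. -/
/-- One step of simple principal pivoting with Murty's least-index rule:
flip the smallest coordinate with an outgoing edge (if any). -/
def murtyNext {n : ℕ} (Φ : (Fin n → Bool) → Fin n → Bool) (v : Fin n → Bool) :
    Fin n → Bool :=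
  let O := Finset.univ.filter (fun i => Φ v i = false)
  if h : O.Nonempty then cflip v (O.min' h) else v

lemma murty_step {n : ℕ} (Φ : (Fin n → Bool) → Fin n → Bool) (v : Fin n → Bool)
    (k : Fin n) (hk0 : Φ v k = false)
    (hmin : ∀ i : Fin n, (i : ℕ) < (k : ℕ) → Φ v i = true) :
    murtyNext Φ v = cflip v k := by
  classical
  unfold murtyNext
  set O := Finset.univ.filter (fun i => Φ v i = false) with hO
  have hkO : k ∈ O := by simp [hO, hk0]
  have hne : O.Nonempty := ⟨k, hkO⟩
  rw [dif_pos hne]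
  have h1 : O.min' hne ≤ k := Finset.min'_le _ _ hkO
  have h2 : k ≤ O.min' hne := by
    by_contra hlt
    push_neg at hlt
    have hval : ((O.min' hne : Fin n) : ℕ) < (k : ℕ) := hlt
    have htrue := hmin (O.min' hne) hval
    have hm : O.min' hne ∈ O := Finset.min'_mem _ _
    simp [hO] at hm
    rw [htrue] at hm
    exact absurd hm (by simp)
  rw [le_antisymm h1 h2]

lemma murty_key {n : ℕ} (Φ : (Fin n → Bool) → Fin n → Bool)
    (hU : HasUniqueSinks Φ) (k : ℕ) :
    ∀ v, ∃ N : ℕ,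
      (∀ j : Fin n, k ≤ (j : ℕ) → (murtyNext Φ)^[N] v j = v j) ∧
      (∀ i : Fin n, (i : ℕ) < k → Φ ((murtyNext Φ)^[N] v) i = true) := by
  classical
  induction k with
  | zero => intro v; exact ⟨0, fun j _ => rfl, fun i hi => absurd hi (Nat.not_lt_zero _)⟩
  | succ k ih =>
    intro v
    obtain ⟨N1, h1fix, h1sink⟩ := ih v
    set w1 := (murtyNext Φ)^[N1] v with hw1
    by_cases hkn : k < n
    · set kf : Fin n := ⟨k, hkn⟩ with hkf
      by_cases hk : Φ w1 kf = true
      · refine ⟨N1, fun j hj => h1fix j (Nat.le_of_succ_le hj), fun i hi => ?_⟩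
        rcases Nat.lt_or_ge (i : ℕ) k with h | h
        · exact h1sink i h
        · have : i = kf := Fin.ext (Nat.le_antisymm (Nat.lt_succ_iff.mp hi) h)
          rw [this]; exact hk
      · have hkF : Φ w1 kf = false := by
          cases hc : Φ w1 kf
          · rfl
          · exact absurd hc hk
        have hstep : murtyNext Φ w1 = cflip w1 kf :=
          murty_step Φ w1 kf hkF (fun i hi => h1sink i hi)
        set v2 := cflip w1 kf with hv2
        obtain ⟨N2, h2fix, h2sink⟩ := ih v2
        set w2 := (murtyNext Φ)^[N2] v2 with hw2
        -- basic coordinate facts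
        have hv2ne : ∀ j : Fin n, j ≠ kf → v2 j = w1 j := by
          intro j hj; simp [hv2, cflip, hj]
        have hv2k : v2 kf = !w1 kf := by simp [hv2, cflip]
        have hw1k : w1 kf = v kf := h1fix kf (le_refl k)
        -- the sink of the (k+1)-subcube containing v
        set C : Finset (Fin n) := Finset.univ.filter (fun i : Fin n => (i : ℕ) < k + 1)
          with hC
        obtain ⟨s, ⟨hsIn, hsSink⟩, hsuniq⟩ := hU v C
        set Ck : Finset (Fin n) := Finset.univ.filter (fun i : Fin n => (i : ℕ) < k)
          with hCk
        have hmemC : ∀ j : Fin n, j ∈ C ↔ (j : ℕ) < k + 1 := by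
          intro j; simp [hC]
        have hmemCk : ∀ j : Fin n, j ∈ Ck ↔ (j : ℕ) < k := by
          intro j; simp [hCk]
        have hkfC : kf ∈ C := (hmemC kf).mpr (Nat.lt_succ_self k)
        have hsk : Φ s kf = true := hsSink kf hkfC
        -- key claim: Φ w2 kf = true
        have hkey : Φ w2 kf = true := by
          by_cases hskv : s kf = v kf
          · -- then s is the sink of the k-subcube of w1, so s = w1, contradiction
            exfalso
            obtain ⟨t, _, htuniq⟩ := hU w1 Ck
            have e1 : s = t := by
              apply htuniq
              constructor
              · intro j hj
                rw [hmemCk] at hj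
                push_neg at hj
                rcases Nat.lt_or_ge k (j : ℕ) with h | h
                · have hjC : j ∉ C := by rw [hmemC]; omega
                  rw [hsIn j hjC, ← h1fix j (Nat.le_of_lt h)]
                · have : j = kf := Fin.ext (Nat.le_antisymm h hj)
                  rw [this, hskv, hw1k]
              · intro i hi
                exact hsSink i ((hmemC i).mpr (Nat.lt_succ_of_lt ((hmemCk i).mp hi)))
            have e2 : w1 = t := by
              apply htuniq
              exact ⟨fun j _ => rfl, fun i hi => h1sink i ((hmemCk i).mp hi)⟩
            rw [e2, ← e1, hsk] at hkF
            simp at hkF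
          · -- then s is the sink of the k-subcube of w2, so s = w2
            have hskv' : s kf = !(v kf) := by
              revert hskv; cases hc : s kf <;> cases hc2 : v kf <;> simp
            obtain ⟨t, _, htuniq⟩ := hU w2 Ck
            have e1 : s = t := by
              apply htuniq
              constructor
              · intro j hj
                rw [hmemCk] at hj
                push_neg at hj
                rcases Nat.lt_or_ge k (j : ℕ) with h | h
                · have hjC : j ∉ C := by rw [hmemC]; omega
                  have hjne : j ≠ kf := by
                    intro hjj; rw [hjj] at h; exact absurd h (by simp [hkf])
                  rw [hsIn j hjC, ← h1fix j (Nat.le_of_lt h), ← hv2ne j hjne,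
                    ← h2fix j (Nat.le_of_lt h)]
                · have hje : j = kf := Fin.ext (Nat.le_antisymm h hj)
                  rw [hje, hskv', ← hw1k, ← hv2k, ← h2fix kf (le_refl k)]
              · intro i hi
                exact hsSink i ((hmemC i).mpr (Nat.lt_succ_of_lt ((hmemCk i).mp hi)))
            have e2 : w2 = t := by
              apply htuniq
              exact ⟨fun j _ => rfl, fun i hi => h2sink i ((hmemCk i).mp hi)⟩
            rw [e2, ← e1]
            exact hsk
        -- assemble: N = N2 + (1 + N1)
        refine ⟨N2 + (1 + N1), ?_, ?_⟩
        all_goals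
          have hiter : (murtyNext Φ)^[N2 + (1 + N1)] v = w2 := by
            rw [Function.iterate_add_apply, Function.iterate_add_apply,
              Function.iterate_one, ← hw1, hstep, ← hw2]
        · intro j hj
          rw [hiter]
          have hjk : k ≤ (j : ℕ) := Nat.le_of_succ_le hj
          have hjne : j ≠ kf := by
            intro hjj
            rw [hjj] at hj
            exact absurd hj (by simp [hkf])
          rw [h2fix j hjk, hv2ne j hjne, h1fix j hjk]
        · intro i hi
          rw [hiter]
          rcases Nat.lt_or_ge (i : ℕ) k with h | h
          · exact h2sink i h
          · have : i = kf := Fin.ext (Nat.le_antisymm (Nat.lt_succ_iff.mp hi) h)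
            rw [this]; exact hkey
    · refine ⟨N1, fun j hj => h1fix j (Nat.le_of_succ_le hj), fun i hi => ?_⟩
      exact h1sink i (Nat.lt_of_lt_of_le i.isLt (Nat.le_of_not_lt hkn))

/-- on any USO of the `n`-cube, simple principal pivoting with
Murty's least-index rule reaches the global sink after finitely many steps,
from any start vertex. -/
theorem murty_terminates {n : ℕ} (Φ : (Fin n → Bool) → Fin n → Bool)
    (h : IsUSO Φ) (v : Fin n → Bool) :
    ∃ N : ℕ, ∀ i, Φ ((murtyNext Φ)^[N] v) i = true := by
  obtain ⟨N, _, hsink⟩ := murty_key Φ h.2 n v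
  exact ⟨N, fun i => hsink i i.isLt⟩
end

section
/- In the n-dimensional Morris orientation (n odd), the level function ℓ(v) = |{i : v_i = 0 and Φ(v)_i = -}| does not increase along directed edges: if v → u is a directed edge, then ℓ(u) ≤ ℓ(v). -/
/-- Length of the run of `1`s at positions `j+1, j+2, …` (cyclically), i.e. the state
of the Morris transducer just before reading `v j` is `T` iff this run length is odd. -/
def morrisRun {n : ℕ} [NeZero n] (v : Fin n → Bool) (j : Fin n) : ℕ :=
  let K := (Finset.range n).filter (fun k : ℕ => v (j + 1 + (Fin.ofNat n k)) = false)
  if h : K.Nonempty then K.min' h else 0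

/-- The Morris orientation of the `n`-cube (`n` odd), given by the two-state transducer:
the all-ones vertex is the global sink; otherwise the edge at `v` in coordinate `j` is
outgoing (`false`) iff `v j` agrees with the parity of the run of ones above `j`. -/
def morris {n : ℕ} [NeZero n] (v : Fin n → Bool) : Fin n → Bool :=
  fun j =>
    if ∀ i, v i = true then true
    else !(v j == decide (Odd (morrisRun v j)))

/-- The level of a vertex: the number of coordinates carrying the pattern `(0,-)`. -/
def morrisLevel {n : ℕ} [NeZero n] (v : Fin n → Bool) : ℕ :=
  (Finset.univ.filter (fun i => v i = false ∧ morris v i = false)).card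

/-!
Off the global sink, coordinate `j` counts towards the level iff `v j = 0` and the cyclic run of
ones above `j` has even length, and the edge in direction `i` leaves `v` iff `v i` equals the
parity of the run above `i`. Flipping `i` only changes the runs of the zeros whose run ends at `i`
(there is at most one such zero, the last zero before `i`).

* If `v i = 1`, the run above `i` is odd, so the new zero `i` is not counted, and a zero whose
  new run ends at `i` with even length had, in `v`, a run longer by `1 + odd`, hence even: every
  counted zero of the neighbour was counted in `v`.
* If `v i = 0`, the run above `i` is even, so `i` was counted; the only zero whose run changes
  can be charged to `i`, and all other counted zeros keep their runs.
-/

open Finset Fin.NatCast Fin.CommRing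

section CyclicOffset

variable {n : ℕ} [NeZero n]

def cyclicOffset (j i : Fin n) : ℕ := (i - j - 1 : Fin n).val

lemma cyclicOffset_lt (j i : Fin n) : cyclicOffset j i < n := Fin.is_lt _

lemma add_cyclicOffset (j i : Fin n) : j + 1 + (cyclicOffset j i : Fin n) = i := by
  simp only [cyclicOffset, Fin.cast_val_eq_self]; ring

lemma eq_cyclicOffset_of_add_eq {j i : Fin n} {k : ℕ} (hk : k < n) (h : j + 1 + (k : Fin n) = i) :
    k = cyclicOffset j i := by
  rw [cyclicOffset, ← Fin.val_cast_of_lt hk, ← h]; ring_nf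

lemma cyclicOffset_self (i : Fin n) : cyclicOffset i i = n - 1 := by
  refine (eq_cyclicOffset_of_add_eq (by have := NeZero.pos n; omega) ?_).symm
  have : ((n - 1 : ℕ) : Fin n) + 1 = 0 := by
    rw [← Nat.cast_add_one, Nat.sub_add_cancel (NeZero.pos n), Fin.natCast_self]
  linear_combination this

lemma cyclicOffset_left_injective (i : Fin n) : Function.Injective (cyclicOffset · i) := by
  intro a b h
  have := (add_cyclicOffset a i).trans (add_cyclicOffset b i).symm
  simp only at h
  rw [h] at this
  exact add_right_cancel (add_right_cancel this)

lemma cyclicOffset_right_injective (j : Fin n) : Function.Injective (cyclicOffset j) :=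
  fun a b h => (add_cyclicOffset j a).symm.trans (h ▸ add_cyclicOffset j b)

lemma add_ne_of_lt_cyclicOffset {j i : Fin n} {k : ℕ} (hk : k < cyclicOffset j i) :
    j + 1 + (k : Fin n) ≠ i := fun h =>
  hk.ne (eq_cyclicOffset_of_add_eq (hk.trans (cyclicOffset_lt j i)) h)

lemma cyclicOffset_lt_cyclicOffset_self {i j : Fin n} (h : j ≠ i) :
    cyclicOffset i j < cyclicOffset i i := by
  have hne : cyclicOffset i j ≠ cyclicOffset i i := (cyclicOffset_right_injective i).ne h
  have := cyclicOffset_lt i j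
  rw [cyclicOffset_self] at hne ⊢
  omega

lemma add_cyclicOffset_add (j i : Fin n) (t : ℕ) :
    j + 1 + ((cyclicOffset j i + 1 + t : ℕ) : Fin n) = i + 1 + (t : Fin n) := by
  have := add_cyclicOffset j i
  push_cast
  linear_combination this

end CyclicOffset

section Cflip

variable {n : ℕ}

lemma cflip_apply_self (v : Fin n → Bool) (i : Fin n) : cflip v i i = !v i := by
  simp [cflip]

lemma cflip_apply_of_ne (v : Fin n → Bool) {i j : Fin n} (h : j ≠ i) : cflip v i j = v j := by
  simp [cflip, h]

lemma cflip_cflip (v : Fin n → Bool) (i : Fin n) : cflip (cflip v i) i = v := by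
  funext j
  by_cases h : j = i <;> simp [cflip, h]

end Cflip

section MorrisRun

variable {n : ℕ} [NeZero n] {w w' : Fin n → Bool}

/-- The cut-off at `n` in `morrisRun` is invisible: any zero is reached within `n` steps. -/
lemma isLeast_morrisRun (hw : ∃ a, w a = false) (j : Fin n) :
    IsLeast {k : ℕ | w (j + 1 + (k : Fin n)) = false} (morrisRun w j) := by
  obtain ⟨a, ha⟩ := hw
  set K := (range n).filter fun k : ℕ => w (j + 1 + (k : Fin n)) = false
  have hK : K.Nonempty := ⟨cyclicOffset j a, by simp [K, cyclicOffset_lt, add_cyclicOffset, ha]⟩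
  have hrun : morrisRun w j = K.min' hK := by
    simp only [morrisRun, Fin.ofNat_eq_cast, dif_pos hK, K]
  have hmem := K.min'_mem hK
  simp only [K, mem_filter, mem_range] at hmem
  refine ⟨by simpa [hrun] using hmem.2, fun k hk => ?_⟩
  rw [hrun]
  rcases lt_or_ge k n with hkn | hkn
  · exact K.min'_le k (by simpa [K, hkn] using hk)
  · exact (hmem.1.trans_le hkn).le

lemma apply_add_morrisRun (hw : ∃ a, w a = false) (j : Fin n) :
    w (j + 1 + (morrisRun w j : Fin n)) = false :=
  (isLeast_morrisRun hw j).1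

lemma morrisRun_le {j : Fin n} {k : ℕ} (hk : w (j + 1 + (k : Fin n)) = false) :
    morrisRun w j ≤ k :=
  (isLeast_morrisRun ⟨_, hk⟩ j).2 hk

lemma apply_add_of_lt_morrisRun {j : Fin n} {k : ℕ} (hk : k < morrisRun w j) :
    w (j + 1 + (k : Fin n)) = true := by
  by_contra h
  exact (morrisRun_le (Bool.eq_false_iff.mpr h)).not_gt hk

lemma morrisRun_eq {j : Fin n} {m : ℕ} (hm : w (j + 1 + (m : Fin n)) = false)
    (hlt : ∀ k < m, w (j + 1 + (k : Fin n)) = true) : morrisRun w j = m :=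
  (isLeast_morrisRun ⟨_, hm⟩ j).unique ⟨hm, fun k hk => not_lt.mp fun h => by simp [hlt k h] at hk⟩

lemma morrisRun_le_cyclicOffset {a : Fin n} (ha : w a = false) (j : Fin n) :
    morrisRun w j ≤ cyclicOffset j a :=
  morrisRun_le (by rwa [add_cyclicOffset])

lemma morrisRun_congr (hw : ∃ a, w a = false) {j : Fin n}
    (h : ∀ k ≤ morrisRun w j, w' (j + 1 + (k : Fin n)) = w (j + 1 + (k : Fin n))) :
    morrisRun w' j = morrisRun w j :=
  morrisRun_eq (by rw [h _ le_rfl, apply_add_morrisRun hw])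
    fun k hk => by rw [h k hk.le, apply_add_of_lt_morrisRun hk]

end MorrisRun

section FlipOneCoordinate

variable {n : ℕ} [NeZero n] {w : Fin n → Bool} {i j : Fin n}

lemma morrisRun_cflip_of_lt_cyclicOffset (hw : ∃ a, w a = false)
    (h : morrisRun w j < cyclicOffset j i) : morrisRun (cflip w i) j = morrisRun w j :=
  morrisRun_congr hw fun _ hk => cflip_apply_of_ne w (add_ne_of_lt_cyclicOffset (hk.trans_lt h))

/-- Another zero `j` stops the run above the zero `i` before it wraps around to `i`. -/
lemma morrisRun_cflip_self (hi : w i = false) (hj : w j = false) (hji : j ≠ i) :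
    morrisRun (cflip w i) i = morrisRun w i :=
  morrisRun_congr ⟨i, hi⟩ fun _ hk => cflip_apply_of_ne w (add_ne_of_lt_cyclicOffset
    ((hk.trans (morrisRun_le_cyclicOffset hj i)).trans_lt (cyclicOffset_lt_cyclicOffset_self hji)))

lemma morrisRun_cflip_of_eq_cyclicOffset (hi : w i = false) (hj : w j = false) (hji : j ≠ i)
    (h : morrisRun w j = cyclicOffset j i) :
    morrisRun (cflip w i) j = cyclicOffset j i + 1 + morrisRun w i := by
  have hne : ∀ k ≤ morrisRun w i, i + 1 + (k : Fin n) ≠ i := fun _ hk =>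
    add_ne_of_lt_cyclicOffset ((hk.trans (morrisRun_le_cyclicOffset hj i)).trans_lt
      (cyclicOffset_lt_cyclicOffset_self hji))
  apply morrisRun_eq
  · rw [add_cyclicOffset_add, cflip_apply_of_ne w (hne _ le_rfl), apply_add_morrisRun ⟨i, hi⟩]
  intro k hk
  rcases lt_trichotomy k (cyclicOffset j i) with hlt | rfl | hgt
  · rw [cflip_apply_of_ne w (add_ne_of_lt_cyclicOffset hlt),
      apply_add_of_lt_morrisRun (w := w) (by omega)]
  · rw [add_cyclicOffset, cflip_apply_self, hi, Bool.not_false]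
  · obtain ⟨t, rfl⟩ : ∃ t, k = cyclicOffset j i + 1 + t := ⟨k - cyclicOffset j i - 1, by omega⟩
    have ht : t < morrisRun w i := by omega
    rw [add_cyclicOffset_add, cflip_apply_of_ne w (hne _ ht.le), apply_add_of_lt_morrisRun ht]

end FlipOneCoordinate

section Level

variable {n : ℕ} [NeZero n] {v w : Fin n → Bool} {i : Fin n}

lemma exists_eq_false_of_morris_eq_false {j : Fin n} (h : morris w j = false) :
    ∃ a, w a = false := by
  by_contra hw
  simp only [not_exists, Bool.not_eq_false] at hw
  simp [morris, hw] at h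

lemma morris_eq_false_iff (hw : ∃ a, w a = false) (j : Fin n) :
    morris w j = false ↔ w j = decide (Odd (morrisRun w j)) := by
  have : ¬ ∀ a, w a = true := fun h => by simp [h] at hw
  simp [morris, this]

lemma morrisLevel_eq_card (w : Fin n → Bool) :
    morrisLevel w = #{j | w j = false ∧ Even (morrisRun w j)} := by
  unfold morrisLevel
  congr 1
  refine filter_congr fun j _ => and_congr_right fun hj => ?_
  rw [morris_eq_false_iff ⟨j, hj⟩, hj, eq_comm, decide_eq_false_iff_not, Nat.not_odd_iff_even]

/-- A zero strictly between `b` and `i` would end the run above `b` before `i`. -/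
lemma cyclicOffset_le_of_morrisRun_eq {a b : Fin n} (ha : w a = false)
    (hb : morrisRun w b = cyclicOffset b i) : cyclicOffset b i ≤ cyclicOffset a i := by
  by_contra! hlt
  set t := cyclicOffset b i - cyclicOffset a i - 1
  have hbt : b + 1 + (t : Fin n) = a := by
    have hsum : ((cyclicOffset b i : ℕ) : Fin n) = (t : Fin n) + 1 + cyclicOffset a i := by
      rw [show cyclicOffset b i = t + 1 + cyclicOffset a i by omega]; push_cast; ring
    have hb' := add_cyclicOffset b i
    rw [hsum] at hb'
    linear_combination hb' - add_cyclicOffset a i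
  have := morrisRun_le (w := w) (j := b) (k := t) (by rwa [hbt])
  omega

lemma eq_of_morrisRun_eq_cyclicOffset {a b : Fin n} (ha : w a = false) (hb : w b = false)
    (hra : morrisRun w a = cyclicOffset a i) (hrb : morrisRun w b = cyclicOffset b i) : a = b :=
  cyclicOffset_left_injective i <|
    le_antisymm (cyclicOffset_le_of_morrisRun_eq hb hra) (cyclicOffset_le_of_morrisRun_eq ha hrb)

lemma morrisLevel_cflip_le_of_eq_true (hw : ∃ a, v a = false) (hvi : v i = true)
    (hodd : Odd (morrisRun v i)) : morrisLevel (cflip v i) ≤ morrisLevel v := by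
  have hui : cflip v i i = false := by simp [cflip_apply_self, hvi]
  have hvu : cflip (cflip v i) i = v := cflip_cflip v i
  obtain ⟨a, ha⟩ := hw
  have hai : a ≠ i := by rintro rfl; simp [hvi] at ha
  have hrun : morrisRun v i = morrisRun (cflip v i) i := by
    rw [← morrisRun_cflip_self hui (by rwa [cflip_apply_of_ne v hai]) hai, cflip_cflip]
  rw [morrisLevel_eq_card, morrisLevel_eq_card]
  refine card_le_card fun j hj => ?_
  simp only [mem_filter, mem_univ, true_and] at hj ⊢
  obtain ⟨huj, heven⟩ := hj
  have hji : j ≠ i := by rintro rfl; exact Nat.not_even_iff_odd.mpr (hrun ▸ hodd) heven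
  refine ⟨by rwa [cflip_apply_of_ne v hji] at huj, ?_⟩
  rcases (morrisRun_le_cyclicOffset hui j).lt_or_eq with hlt | heq
  · rwa [← hvu, morrisRun_cflip_of_lt_cyclicOffset ⟨i, hui⟩ hlt]
  · rw [← hvu, morrisRun_cflip_of_eq_cyclicOffset hui huj hji heq, ← heq, ← hrun]
    exact heven.add_one.add_odd hodd

lemma morrisLevel_cflip_le_of_eq_false (hvi : v i = false) (heven : Even (morrisRun v i)) :
    morrisLevel (cflip v i) ≤ morrisLevel v := by
  rw [morrisLevel_eq_card, morrisLevel_eq_card]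
  refine card_le_card_of_injOn (fun j => if morrisRun v j = cyclicOffset j i then i else j)
    (fun j hj => ?_) (fun a ha b hb hab => ?_)
  · simp only [coe_filter, mem_univ, true_and, Set.mem_ofPred_eq] at hj ⊢
    obtain ⟨huj, hevenj⟩ := hj
    have hji : j ≠ i := by rintro rfl; simp [cflip_apply_self, hvi] at huj
    have hvj : v j = false := by rwa [cflip_apply_of_ne v hji] at huj
    split_ifs with heq
    · exact ⟨hvi, heven⟩
    · have hlt := (morrisRun_le_cyclicOffset hvi j).lt_of_ne heq
      exact ⟨hvj, morrisRun_cflip_of_lt_cyclicOffset ⟨i, hvi⟩ hlt ▸ hevenj⟩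
  · simp only [coe_filter, mem_univ, true_and, Set.mem_ofPred_eq] at ha hb
    have hai : a ≠ i := by rintro rfl; simp [cflip_apply_self, hvi] at ha
    have hbi : b ≠ i := by rintro rfl; simp [cflip_apply_self, hvi] at hb
    have hva : v a = false := by rw [← ha.1, cflip_apply_of_ne v hai]
    have hvb : v b = false := by rw [← hb.1, cflip_apply_of_ne v hbi]
    simp only at hab
    split_ifs at hab with hra hrb hrb
    · exact eq_of_morrisRun_eq_cyclicOffset hva hvb hra hrb
    · exact absurd hab.symm hbi
    · exact absurd hab hai
    · exact hab

end Level

theorem morris_level_monotone_general {n : ℕ} [NeZero n]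
    (v u : Fin n → Bool) (h : Step (morris) v u) :
    morrisLevel u ≤ morrisLevel v := by
  obtain ⟨i, hi, rfl⟩ := h
  have hv := exists_eq_false_of_morris_eq_false hi
  rw [morris_eq_false_iff hv] at hi
  cases hvi : v i
  · rw [hvi, eq_comm, decide_eq_false_iff_not, Nat.not_odd_iff_even] at hi
    exact morrisLevel_cflip_le_of_eq_false hvi hi
  · rw [hvi, eq_comm, decide_eq_true_iff] at hi
    exact morrisLevel_cflip_le_of_eq_true hv hvi hi

/-- in the Morris orientation (`n` odd), the level does not
increase along directed edges. -/
theorem morris_level_monotone {n : ℕ} [NeZero n] (hn : Odd n)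
    (v u : Fin n → Bool) (h : Step (morris) v u) :
    morrisLevel u ≤ morrisLevel v :=
  morris_level_monotone_general v u h
end

section
/- In the n-dimensional Morris orientation, let v be a vertex with v_k = 0 for some coordinate k. Then any directed path starting from v reaches a vertex u with u_k = 1 after at most n(n+1)/2 steps. -/
/-!
Write position `t` for coordinate `k + t`. While `v k = 0`, the run of ones above any position
ends at or before position `n` (that is, at `k`), so the Morris signs are read off a linear word.
Weigh a `1` at position `t` by `t`, and a `0` by `t + 1` or `0` according as the run of ones
above it is odd or even. Flipping an outgoing edge at a position `t₀ ≠ 0` changes the weights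
only at `t₀` and at the last zero `j < t₀` (position `0` is one): a flip `1 → 0` raises the
weight at `t₀` by one and keeps the parity of the run above `j`; a flip `0 → 1` raises the
weight at `t₀` from `0` to `t₀` and lowers the one at `j` by at most `j + 1`, and only if
`j + 1 < t₀`. So the total weight strictly increases along the path, and it never exceeds
`∑_{t < n} (t + 1) = n(n+1)/2`.
-/

open Fin.NatCast Fin.CommRing

namespace Morris

variable {n : ℕ} [NeZero n] {k : Fin n} {v v' : Fin n → Bool}

lemma add_natCast_add_one_add (k : Fin n) (t c : ℕ) :
    k + (t : Fin n) + 1 + (c : Fin n) = k + ((t + 1 + c : ℕ) : Fin n) := by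
  push_cast; ring

lemma natCast_ne_natCast {u t : ℕ} (hu : u ≤ n) (ht : 0 < t) (htn : t < n) (hne : u ≠ t) :
    (u : Fin n) ≠ t := by
  intro h
  have := congrArg Fin.val h
  rw [Fin.val_natCast, Fin.val_natCast, Nat.mod_eq_of_lt htn] at this
  rcases hu.lt_or_eq with hu | rfl
  · rw [Nat.mod_eq_of_lt hu] at this; exact hne this
  · simp at this; omega

lemma morrisRun_eq_of_next_zero {t b : ℕ} (hb : b ≤ n) (htb : t < b)
    (hones : ∀ u, t < u → u < b → v (k + u) = true) (hzero : v (k + b) = false) :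
    morrisRun v (k + t) = b - t - 1 := by
  have hmem : b - t - 1 ∈ (Finset.range n).filter (fun c : ℕ => v (k + t + 1 + c) = false) := by
    simp only [Finset.mem_filter, Finset.mem_range, add_natCast_add_one_add]
    exact ⟨by omega, by rwa [show t + 1 + (b - t - 1) = b by omega]⟩
  simp only [morrisRun, Fin.ofNat_eq_cast]
  rw [dif_pos ⟨_, hmem⟩]
  refine le_antisymm (Finset.min'_le _ _ hmem) (Finset.le_min' _ _ _ fun c hc => ?_)
  simp only [Finset.mem_filter, add_natCast_add_one_add] at hc
  by_contra hlt
  exact Bool.false_ne_true (hc.2 ▸ hones (t + 1 + c) (by omega) (by omega))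

lemma exists_next_zero {t b : ℕ} (htb : t < b) (hzero : v (k + b) = false) :
    ∃ b' ≤ b, t < b' ∧ (∀ u, t < u → u < b' → v (k + u) = true) ∧ v (k + b') = false := by
  classical
  have hex : ∃ b', t < b' ∧ v (k + b') = false := ⟨b, htb, hzero⟩
  refine ⟨Nat.find hex, Nat.find_min' hex ⟨htb, hzero⟩, (Nat.find_spec hex).1,
    fun u htu hu => ?_, (Nat.find_spec hex).2⟩
  simpa [htu] using Nat.find_min hex hu

lemma morrisRun_congr {t b : ℕ} (hb : b ≤ n) (htb : t < b)
    (hagree : ∀ u, t < u → u < b → v' (k + u) = v (k + u))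
    (hzero : v (k + b) = false) (hzero' : v' (k + b) = false) :
    morrisRun v' (k + t) = morrisRun v (k + t) := by
  obtain ⟨b', hb'b, htb', hones, hzero_b'⟩ := exists_next_zero htb hzero
  have hzero'_b' : v' (k + b') = false := by
    rcases hb'b.lt_or_eq with h | rfl
    · rw [hagree b' htb' h, hzero_b']
    · exact hzero'
  rw [morrisRun_eq_of_next_zero (hb'b.trans hb) htb' hones hzero_b',
    morrisRun_eq_of_next_zero (hb'b.trans hb) htb'
      (fun u h1 h2 => (hagree u h1 (by omega)).trans (hones u h1 h2)) hzero'_b']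

lemma morrisRun_eq_add (hk : v k = false) {t s : ℕ} (hts : t ≤ s) (hs : s < n)
    (hones : ∀ u, t < u → u ≤ s → v (k + u) = true) :
    morrisRun v (k + t) = s - t + morrisRun v (k + s) := by
  obtain ⟨b, hbn, hsb, hones', hzero⟩ := exists_next_zero (k := k) (v := v) hs (by simpa using hk)
  rw [morrisRun_eq_of_next_zero hbn hsb hones' hzero,
    morrisRun_eq_of_next_zero hbn (by omega) _ hzero]
  · omega
  · intro u h1 h2
    rcases le_or_gt u s with h | h
    exacts [hones u h1 h, hones' u h h2]

lemma morris_eq_false_iff (hk : v k = false) {j : Fin n} :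
    morris v j = false ↔ v j = decide (Odd (morrisRun v j)) := by
  have hnot : ¬ ∀ i, v i = true := fun h => by simp [h k] at hk
  simp [morris, hnot]

def morrisWeight (k : Fin n) (v : Fin n → Bool) (t : ℕ) : ℕ :=
  if v (k + t) then t else if Odd (morrisRun v (k + t)) then t + 1 else 0

def morrisPotential (k : Fin n) (v : Fin n → Bool) : ℕ :=
  ∑ t ∈ Finset.range n, morrisWeight k v t

lemma morrisPotential_le (k : Fin n) (v : Fin n → Bool) : morrisPotential k v ≤ n * (n + 1) / 2 :=
  calc morrisPotential k v ≤ ∑ t ∈ Finset.range n, (t + 1) :=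
        Finset.sum_le_sum fun t _ => by unfold morrisWeight; split_ifs <;> omega
    _ = ∑ t ∈ Finset.range (n + 1), t := by rw [Finset.sum_range_succ', add_zero]
    _ = n * (n + 1) / 2 := by rw [Finset.sum_range_id, Nat.add_sub_cancel, mul_comm]

section Flip

variable {t₀ : ℕ}

lemma cflip_apply_natCast (ht₀ : 0 < t₀) (ht₀n : t₀ < n) {u : ℕ} (hu : u ≤ n) (hne : u ≠ t₀) :
    cflip v (k + t₀) (k + u) = v (k + u) := by
  simp [cflip, natCast_ne_natCast hu ht₀ ht₀n hne]

lemma morrisRun_cflip_of_le (hk : v k = false) (ht₀ : 0 < t₀) (ht₀n : t₀ < n) {t : ℕ}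
    (htt₀ : t₀ ≤ t) (ht : t < n) : morrisRun (cflip v (k + t₀)) (k + t) = morrisRun v (k + t) := by
  have hk' : v (k + (n : ℕ)) = false := by simpa using hk
  exact morrisRun_congr le_rfl ht (fun u h1 h2 => cflip_apply_natCast ht₀ ht₀n h2.le (by omega))
    hk' ((cflip_apply_natCast ht₀ ht₀n le_rfl (by omega)).trans hk')

lemma morrisWeight_cflip_of_ne (hk : v k = false) (ht₀ : 0 < t₀) (ht₀n : t₀ < n) {j t : ℕ}
    (hjt₀ : j < t₀) (hj : v (k + j) = false) (hones : ∀ u, j < u → u < t₀ → v (k + u) = true)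
    (ht : t < n) (htj : t ≠ j) (htt₀ : t ≠ t₀) :
    morrisWeight k (cflip v (k + t₀)) t = morrisWeight k v t := by
  have hagree {u : ℕ} (hu : u ≤ n) (hne : u ≠ t₀) : cflip v (k + t₀) (k + u) = v (k + u) :=
    cflip_apply_natCast ht₀ ht₀n hu hne
  rcases lt_or_gt_of_ne htj with htj | htj
  · have hrun := morrisRun_congr (b := j) (by omega) htj
      (fun u h1 h2 => hagree (by omega) (by omega)) hj ((hagree (by omega) (by omega)).trans hj)
    simp only [morrisWeight, hagree ht.le htt₀, hrun]
  rcases lt_or_gt_of_ne htt₀ with htt₀ | htt₀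
  · simp only [morrisWeight, hagree ht.le htt₀.ne, hones t htj htt₀, if_true]
  · simp only [morrisWeight, hagree ht.le htt₀.ne', morrisRun_cflip_of_le hk ht₀ ht₀n htt₀.le ht]

lemma morrisWeight_cflip_add_lt (hk : v k = false) (ht₀ : 0 < t₀) (ht₀n : t₀ < n) {j : ℕ}
    (hjt₀ : j < t₀) (hj : v (k + j) = false) (hones : ∀ u, j < u → u < t₀ → v (k + u) = true)
    (hout : v (k + t₀) = decide (Odd (morrisRun v (k + t₀)))) :
    morrisWeight k v t₀ + morrisWeight k v j <
      morrisWeight k (cflip v (k + t₀)) t₀ + morrisWeight k (cflip v (k + t₀)) j := by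
  have hagree {u : ℕ} (hu : u ≤ n) (hne : u ≠ t₀) : cflip v (k + t₀) (k + u) = v (k + u) :=
    cflip_apply_natCast ht₀ ht₀n hu hne
  have hflip : cflip v (k + t₀) (k + t₀) = !v (k + t₀) := by simp [cflip]
  have hj' : cflip v (k + t₀) (k + j) = false := (hagree (by omega) hjt₀.ne).trans hj
  have hrun₀ := morrisRun_cflip_of_le hk ht₀ ht₀n le_rfl ht₀n
  cases h : v (k + t₀)
  · have hR : ¬ Odd (morrisRun v (k + t₀)) := by simpa [h, eq_comm] using hout
    have hrun := morrisRun_eq_of_next_zero ht₀n.le hjt₀ hones h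
    simp only [morrisWeight, h, hflip, hj, hj', hrun, hrun₀, hR, Bool.false_eq_true,
      Bool.not_false, if_true, if_false, Nat.odd_iff]
    split_ifs <;> omega
  · have hR : Odd (morrisRun v (k + t₀)) := by simpa [h, eq_comm] using hout
    have hrun := morrisRun_eq_add hk hjt₀.le ht₀n fun u h1 h2 => by
      rcases h2.lt_or_eq with h2 | rfl
      exacts [hones u h1 h2, h]
    have hrun' := morrisRun_eq_of_next_zero (v := cflip v (k + t₀)) ht₀n.le hjt₀
      (fun u h1 h2 => (hagree (by omega) h2.ne).trans (hones u h1 h2))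
      (hflip.trans (by rw [h]; rfl))
    rw [Nat.odd_iff] at hR
    simp only [morrisWeight, h, hflip, hj, hj', hrun, hrun', hrun₀, hR, Bool.false_eq_true,
      Bool.not_true, if_true, if_false, Nat.odd_iff]
    split_ifs <;> omega

lemma morrisPotential_lt_cflip (hk : v k = false) (ht₀ : 0 < t₀) (ht₀n : t₀ < n)
    (hout : morris v (k + t₀) = false) :
    morrisPotential k v < morrisPotential k (cflip v (k + t₀)) := by
  classical
  set j := Nat.findGreatest (fun u => v (k + u) = false) (t₀ - 1)
  have hj : v (k + j) = false := Nat.findGreatest_spec (P := fun u => v (k + u) = false)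
    (Nat.zero_le _) (by simpa using hk)
  have hjt₀ : j < t₀ := by
    have := Nat.findGreatest_le (P := fun u => v (k + u) = false) (t₀ - 1)
    omega
  have hones (u : ℕ) (h1 : j < u) (h2 : u < t₀) : v (k + u) = true := by
    simpa using Nat.findGreatest_is_greatest h1 (by omega)
  have ht₀r : t₀ ∈ Finset.range n := Finset.mem_range.2 ht₀n
  have hjr : j ∈ (Finset.range n).erase t₀ :=
    Finset.mem_erase.2 ⟨hjt₀.ne, Finset.mem_range.2 (by omega)⟩
  have hrest : ∑ t ∈ ((Finset.range n).erase t₀).erase j, morrisWeight k (cflip v (k + t₀)) t =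
      ∑ t ∈ ((Finset.range n).erase t₀).erase j, morrisWeight k v t :=
    Finset.sum_congr rfl fun t ht => by
      simp only [Finset.mem_erase, Finset.mem_range] at ht
      exact morrisWeight_cflip_of_ne hk ht₀ ht₀n hjt₀ hj hones ht.2.2 ht.1 ht.2.1
  have hpair :=
    morrisWeight_cflip_add_lt hk ht₀ ht₀n hjt₀ hj hones ((morris_eq_false_iff hk).1 hout)
  unfold morrisPotential
  rw [← Finset.add_sum_erase _ _ ht₀r, ← Finset.add_sum_erase _ _ hjr,
    ← Finset.add_sum_erase _ _ ht₀r, ← Finset.add_sum_erase _ _ hjr, hrest]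
  omega

end Flip

lemma morrisPotential_lt_of_step {u : Fin n → Bool} (hstep : Step morris v u)
    (hv : v k = false) (hu : u k = false) : morrisPotential k v < morrisPotential k u := by
  obtain ⟨i, hout, rfl⟩ := hstep
  have hik : i ≠ k := by rintro rfl; simp [cflip, hv] at hu
  have hi : k + ((i - k).val : Fin n) = i := by rw [Fin.cast_val_eq_self]; ring
  have hpos : 0 < (i - k).val := Nat.pos_of_ne_zero (Fin.val_ne_zero_iff.2 (sub_ne_zero.2 hik))
  rw [← hi] at hout ⊢
  exact morrisPotential_lt_cflip hv hpos (i - k).is_lt hout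

end Morris

lemma le_of_increasing_potential {α : Type*} (f : α → ℕ) (p : ℕ → α) {L B : ℕ}
    (hinc : ∀ m < L, f (p m) < f (p (m + 1))) (hB : f (p L) ≤ B) : L ≤ B := by
  suffices ∀ m ≤ L, m ≤ f (p m) from (this L le_rfl).trans hB
  intro m hm
  induction m with
  | zero => exact Nat.zero_le _
  | succ m ih => exact (ih (by omega)).trans_lt (hinc m hm)

theorem morris_leaves_lower_facet_general {n : ℕ} [NeZero n]
    (k : Fin n) (L : ℕ) (p : ℕ → (Fin n → Bool))
    (hstep : ∀ m < L, Step (morris) (p m) (p (m + 1)))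
    (hzero : ∀ m ≤ L, p m k = false) :
    L ≤ n * (n + 1) / 2 :=
  le_of_increasing_potential (Morris.morrisPotential k) p
    (fun m hm => Morris.morrisPotential_lt_of_step (hstep m hm) (hzero m hm.le) (hzero (m + 1) hm))
    (Morris.morrisPotential_le k (p L))

/-- in the Morris orientation (`n` odd), any directed path starting
at a vertex `v` with `v k = 0` reaches a vertex whose `k`-th coordinate is `1`
after at most `n(n+1)/2` steps; equivalently, a directed path all of whose
vertices have `k`-th coordinate `0` has length at most `n(n+1)/2`. -/
theorem morris_leaves_lower_facet {n : ℕ} [NeZero n] (hn : Odd n)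
    (k : Fin n) (L : ℕ) (p : ℕ → (Fin n → Bool))
    (hstep : ∀ m < L, Step (morris) (p m) (p (m + 1)))
    (hzero : ∀ m ≤ L, p m k = false) :
    L ≤ n * (n + 1) / 2 :=
  morris_leaves_lower_facet_general k L p hstep hzero
end

section
/- The simple principal pivoting algorithm with Murty's least-index rule (identity permutation), started at the all-zeros vertex of the n-dimensional Morris orientation, reaches the global sink after exactly (n²+1)/2 iterations. -/
/-!
Along the pivoting path every vertex is a `zigzag n m t`: ones on the block `[t, m]` and at
`t - 2, t - 4, …`. The Morris transducer state at `i` only depends on the run of ones above `i`,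
so on a zigzag the orientation has a closed form (`morris_zigzag`). Reading off the least outgoing
coordinate, Murty's rule flips `t - 1` while `t ≢ m (mod 2)`, moving the block start down by two,
then flips `t + 1`, moving it back up, until `t = m` (for odd `m` the turn at `t = 0` flips `0`
and gives `t = 1`); and `zigzag n m m = zigzag n (m + 1) (m + 2)`.
So the segment of top `m` takes `m + 1` pivots, the all-zeros vertex `zigzag n 0 1` reaches
`zigzag n (n - 1) n` after `n.choose 2` pivots, and the last segment, which only descends, ends at
the all-ones vertex `zigzag n (n - 1) 0` after `(n + 1) / 2` more. One pivot earlier the vertex is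
`zigzag n (n - 1) 1`, not the sink; as the sink is fixed by the rule, it is not reached earlier.
-/

open Fin.NatCast

lemma murtyNext_eq_cflip {n : ℕ} {Φ : (Fin n → Bool) → Fin n → Bool} {v : Fin n → Bool}
    {k : Fin n} (hk : Φ v k = false) (hlt : ∀ i < k, Φ v i = true) :
    murtyNext Φ v = cflip v k := by
  have hmem : k ∈ Finset.univ.filter (fun i => Φ v i = false) := by simp [hk]
  rw [murtyNext, dif_pos ⟨k, hmem⟩]
  congr
  refine le_antisymm (Finset.min'_le _ k hmem) (not_lt.1 fun h => ?_)
  have := (Finset.mem_filter.1 (Finset.min'_mem _ ⟨k, hmem⟩)).2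
  simp [hlt _ h] at this

lemma murtyNext_eq_self {n : ℕ} {Φ : (Fin n → Bool) → Fin n → Bool} {v : Fin n → Bool}
    (h : ∀ i, Φ v i = true) : murtyNext Φ v = v := by
  simp [murtyNext, h]

lemma murtyNext_morris_true {n : ℕ} [NeZero n] :
    murtyNext morris (fun _ : Fin n => true) = fun _ => true :=
  murtyNext_eq_self fun _ => if_pos fun _ => rfl

lemma morrisRun_eq_s10 {n : ℕ} [NeZero n] {v : Fin n → Bool} {x r : ℕ} (hr : r < n)
    (hone : ∀ k < r, v ((x + 1 + k : ℕ) : Fin n) = true)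
    (hzero : v ((x + 1 + r : ℕ) : Fin n) = false) :
    morrisRun v x = r := by
  have cast (k : ℕ) : (x : Fin n) + 1 + Fin.ofNat n k = ((x + 1 + k : ℕ) : Fin n) := by
    simp [Fin.ofNat_eq_cast]
  have hr' : r ∈ (Finset.range n).filter
      (fun k : ℕ => v ((x : Fin n) + 1 + Fin.ofNat n k) = false) := by
    simp only [Finset.mem_filter, Finset.mem_range, cast]
    exact ⟨hr, hzero⟩
  rw [morrisRun, dif_pos ⟨r, hr'⟩]
  refine le_antisymm (Finset.min'_le _ r hr') (not_lt.1 fun h => ?_)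
  have := (Finset.mem_filter.1 (Finset.min'_mem _ ⟨r, hr'⟩)).2
  rw [cast, hone _ h] at this
  exact Bool.noConfusion this

def zigzag (n m t : ℕ) : Fin n → Bool :=
  fun j => decide (((j : ℕ) < t ∧ (j : ℕ) % 2 = t % 2) ∨
    (t ≤ (j : ℕ) ∧ (j : ℕ) ≤ m))

lemma zigzag_natCast {n m t x : ℕ} [NeZero n] (hx : x < n) :
    zigzag n m t x = decide ((x < t ∧ x % 2 = t % 2) ∨ (t ≤ x ∧ x ≤ m)) := by
  simp [zigzag, Fin.val_natCast, Nat.mod_eq_of_lt hx]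

/-- Position `m + 1` is read cyclically: for `m + 1 = n` it is position `0`. -/
lemma zigzag_natCast_succ_eq_false {n m t : ℕ} [NeZero n] (ht : t ≤ m + 1)
    (h : m + 1 < n ∨ (m + 1 = n ∧ t % 2 = 1)) :
    zigzag n m t ((m + 1 : ℕ) : Fin n) = false := by
  rcases h with h | ⟨rfl, hodd⟩
  · rw [zigzag_natCast h]; simp; omega
  · simp [zigzag]; omega

lemma zigzag_self {n m : ℕ} : zigzag n m m = zigzag n (m + 1) (m + 2) := by
  funext j
  simp only [zigzag, decide_eq_decide]
  omega

lemma zigzag_eq_true {n m : ℕ} (hm : n ≤ m + 1) : zigzag n m 0 = fun _ => true := by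
  funext j
  exact decide_eq_true (by omega)

lemma zigzag_one_ne_true {n m : ℕ} [NeZero n] : zigzag n m 1 ≠ fun _ => true := fun h => by
  simpa [zigzag] using congrFun h 0

lemma cflip_zigzag {n m t k : ℕ} [NeZero n] (hk : k < n) :
    cflip (zigzag n m t) k = fun j : Fin n => decide ((j : ℕ) = k ↔
      ¬ (((j : ℕ) < t ∧ (j : ℕ) % 2 = t % 2) ∨ (t ≤ (j : ℕ) ∧ (j : ℕ) ≤ m))) := by
  funext j
  simp only [cflip, zigzag, Fin.ext_iff, Fin.val_natCast, Nat.mod_eq_of_lt hk]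
  split_ifs with h <;>
    simp only [h, true_iff, false_iff, not_not, ← decide_not]

section MorrisOnZigzag

variable {n m t : ℕ} [NeZero n]

lemma morrisRun_zigzag (hm : m < n) (ht : t ≤ m + 1)
    (hgap : zigzag n m t ((m + 1 : ℕ) : Fin n) = false) {i : ℕ} (hi : i ≤ m) :
    morrisRun (zigzag n m t) i =
      if i + 1 < t then (if i % 2 = t % 2 then 0 else 1) else m - i := by
  split_ifs
  · refine morrisRun_eq_s10 (by omega) (fun k hk => by omega) ?_
    rw [zigzag_natCast (by omega)]; simp; omega
  · refine morrisRun_eq_s10 (by omega) (fun k hk => ?_) ?_ <;>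
      rw [zigzag_natCast (by omega)] <;> simp <;> omega
  · refine morrisRun_eq_s10 (by omega) (fun k hk => ?_) ?_
    · rw [zigzag_natCast (by omega)]; simp; omega
    · rwa [show i + 1 + (m - i) = m + 1 by omega]

lemma morris_zigzag (hm : m < n) (ht : t ≤ m + 1)
    (hgap : zigzag n m t ((m + 1 : ℕ) : Fin n) = false) {i : ℕ} (hi : i ≤ m) :
    morris (zigzag n m t) i = decide (i + 1 < t ∨ (t ≤ i ↔ (m - i) % 2 = 0)) := by
  have hne : ¬ ∀ j, zigzag n m t j = true := fun h => by simp [h] at hgap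
  rw [morris, if_neg hne, morrisRun_zigzag hm ht hgap hi, zigzag_natCast (by omega),
    Bool.decide_beq_decide, ← decide_not, decide_eq_decide]
  split_ifs <;> simp only [Nat.odd_iff, iff_true] <;> omega

lemma murtyNext_morris_zigzag (hm : m < n) (ht : t ≤ m + 1)
    (hgap : zigzag n m t ((m + 1 : ℕ) : Fin n) = false) {k : ℕ} (hk : k ≤ m)
    (hout : ¬ (k + 1 < t ∨ (t ≤ k ↔ (m - k) % 2 = 0)))
    (hin : ∀ i < k, i + 1 < t ∨ (t ≤ i ↔ (m - i) % 2 = 0)) :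
    murtyNext morris (zigzag n m t) = cflip (zigzag n m t) k := by
  refine murtyNext_eq_cflip ?_ fun i hi => ?_
  · rw [morris_zigzag hm ht hgap hk]
    exact decide_eq_false hout
  · have hik : (i : ℕ) < k := by
      rwa [Fin.lt_def, Fin.val_natCast, Nat.mod_eq_of_lt (by omega)] at hi
    rw [← Fin.cast_val_eq_self i, morris_zigzag hm ht hgap (by omega)]
    exact decide_eq_true (hin i hik)

/-- For `t = 1` the truncated `t - 2 = 0` is the right target. -/
lemma murtyNext_morris_zigzag_descend (hm : m < n) (ht : t ≤ m + 1)
    (hgap : zigzag n m t ((m + 1 : ℕ) : Fin n) = false)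
    (ht1 : 1 ≤ t) (hpar : t % 2 ≠ m % 2) :
    murtyNext morris (zigzag n m t) = zigzag n m (t - 2) := by
  rw [murtyNext_morris_zigzag hm ht hgap (k := t - 1) (by omega) (by omega)
    (fun i hi => by omega), cflip_zigzag (by omega)]
  funext j
  simp only [zigzag, decide_eq_decide]
  omega

lemma murtyNext_morris_zigzag_ascend (hm : m < n)
    (hgap : zigzag n m t ((m + 1 : ℕ) : Fin n) = false) (ht : t + 2 ≤ m)
    (hpar : t % 2 = m % 2) :
    murtyNext morris (zigzag n m t) = zigzag n m (t + 2) := by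
  rw [murtyNext_morris_zigzag hm (by omega) hgap (k := t + 1) (by omega) (by omega)
    (fun i hi => by omega), cflip_zigzag (by omega)]
  funext j
  simp only [zigzag, decide_eq_decide]
  omega

lemma murtyNext_morris_zigzag_turn (hm : m < n)
    (hgap : zigzag n m 0 ((m + 1 : ℕ) : Fin n) = false) (hpar : m % 2 = 1) :
    murtyNext morris (zigzag n m 0) = zigzag n m 1 := by
  rw [murtyNext_morris_zigzag hm (by omega) hgap (k := 0) (by omega) (by omega)
    (fun i hi => by omega), cflip_zigzag (by omega)]
  funext j
  simp only [zigzag, decide_eq_decide]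
  omega

end MorrisOnZigzag

/-- The block start after `s` pivots of the segment of top `m`, which starts at `t = m + 1`. -/
def blockStart (m s : ℕ) : ℕ :=
  if 2 * s ≤ m + 1 then m + 1 - 2 * s else 2 * s - m - 2

lemma zigzag_blockStart_natCast_succ {n m s : ℕ} [NeZero n] (hs : s ≤ m)
    (h : m + 1 < n ∨ (m + 1 = n ∧ Even m ∧ 2 * s ≤ m)) :
    zigzag n m (blockStart m s) ((m + 1 : ℕ) : Fin n) = false := by
  simp only [Nat.even_iff] at h
  refine zigzag_natCast_succ_eq_false ?_ ?_ <;> unfold blockStart <;> split_ifs <;> omega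

lemma murtyNext_morris_zigzag_blockStart {n m s : ℕ} [NeZero n] (hm : m < n) (hs : s ≤ m)
    (hgap : zigzag n m (blockStart m s) ((m + 1 : ℕ) : Fin n) = false) :
    murtyNext morris (zigzag n m (blockStart m s)) = zigzag n m (blockStart m (s + 1)) := by
  unfold blockStart at hgap ⊢
  by_cases hdesc : 2 * s ≤ m
  · rw [if_pos (by omega)] at hgap ⊢
    rw [murtyNext_morris_zigzag_descend hm (by omega) hgap (by omega) (by omega)]
    congr 1
    split_ifs <;> omega
  by_cases hturn : m + 1 = 2 * s
  · rw [if_pos (by omega), show m + 1 - 2 * s = 0 by omega] at hgap ⊢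
    rw [murtyNext_morris_zigzag_turn hm hgap (by omega), if_neg (by omega)]
    congr 1
    omega
  · rw [if_neg (by omega)] at hgap ⊢
    rw [if_neg (by omega), murtyNext_morris_zigzag_ascend hm hgap (by omega) (by omega)]
    congr 1
    omega

lemma iterate_murtyNext_morris_zigzag {n m s : ℕ} [NeZero n] (hs : s ≤ m + 1)
    (h : m + 1 < n ∨ (m + 1 = n ∧ Even m ∧ 2 * s ≤ m + 2)) :
    (murtyNext morris)^[s] (zigzag n m (m + 1)) = zigzag n m (blockStart m s) := by
  induction s with
  | zero => simp [blockStart]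
  | succ s ih =>
    have h' : m + 1 < n ∨ (m + 1 = n ∧ Even m ∧ 2 * s ≤ m) :=
      h.imp_right fun ⟨hmn, hev, _⟩ => ⟨hmn, hev, by omega⟩
    have hm : m < n := by rcases h' with h' | ⟨h', -⟩ <;> omega
    rw [Function.iterate_succ_apply',
      ih (by omega) (h'.imp_right fun ⟨hmn, hev, _⟩ => ⟨hmn, hev, by omega⟩),
      murtyNext_morris_zigzag_blockStart hm (by omega)
        (zigzag_blockStart_natCast_succ (by omega) h')]

lemma iterate_murtyNext_morris_choose_two {n m : ℕ} [NeZero n] (hm : m < n) :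
    (murtyNext morris)^[(m + 1).choose 2] (fun _ => false) = zigzag n m (m + 1) := by
  induction m with
  | zero =>
    funext j
    exact (decide_eq_false (by omega)).symm
  | succ m ih =>
    rw [Nat.choose_succ_succ, Nat.choose_one_right, Function.iterate_add_apply,
      ih (by omega), iterate_murtyNext_morris_zigzag le_rfl (Or.inl hm), blockStart,
      if_neg (by omega), show 2 * (m + 1) - m - 2 = m by omega, zigzag_self]

lemma odd_sq_add_one_div_two (p : ℕ) :
    ((2 * p + 1) ^ 2 + 1) / 2 = (2 * p + 1).choose 2 + (p + 1) := by
  rw [Nat.choose_two_right, Nat.add_sub_cancel,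
    show (2 * p + 1) * (2 * p) = 2 * (p * (2 * p + 1)) by ring,
    show (2 * p + 1) ^ 2 + 1 = 2 * (p * (2 * p + 1) + (p + 1)) by ring,
    Nat.mul_div_cancel_left _ two_pos, Nat.mul_div_cancel_left _ two_pos]

/-- Murty's least-index rule (identity permutation), started at
the all-zeros vertex of the Morris orientation (`n` odd), reaches the global
sink (the all-ones vertex) after exactly `(n² + 1)/2` iterations: it is there
at time `(n² + 1)/2` and at no earlier time. -/
theorem morris_murty_from_zero {n : ℕ} [NeZero n] (hn : Odd n) :
    ((murtyNext (morris))^[(n ^ 2 + 1) / 2] (fun _ => false) = fun _ : Fin n => true) ∧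
      ∀ N < (n ^ 2 + 1) / 2,
        (murtyNext (morris))^[N] (fun _ => false) ≠ fun _ : Fin n => true := by
  obtain ⟨p, rfl⟩ := hn
  have reach (s : ℕ) (hs : s ≤ p + 1) : (murtyNext morris)^[(2 * p + 1).choose 2 + s]
      (fun _ => false) = zigzag (2 * p + 1) (2 * p) (blockStart (2 * p) s) := by
    rw [add_comm ((2 * p + 1).choose 2) s, Function.iterate_add_apply,
      iterate_murtyNext_morris_choose_two (by omega),
      iterate_murtyNext_morris_zigzag (by omega) (Or.inr ⟨rfl, even_two_mul p, by omega⟩)]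
  have hlast : (murtyNext morris)^[(2 * p + 1).choose 2 + p] (fun _ => false) ≠
      fun _ : Fin (2 * p + 1) => true := by
    rw [reach p (by omega), show blockStart (2 * p) p = 1 by simp [blockStart]]
    exact zigzag_one_ne_true
  rw [odd_sq_add_one_div_two]
  refine ⟨?_, fun N hN hsink => hlast ?_⟩
  · rw [reach (p + 1) le_rfl, show blockStart (2 * p) (p + 1) = 0 by simp [blockStart]; omega]
    exact zigzag_eq_true (by omega)
  · obtain ⟨k, hk⟩ : ∃ k, (2 * p + 1).choose 2 + p = k + N :=
      ⟨_, (Nat.sub_add_cancel (by omega)).symm⟩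
    rw [hk, Function.iterate_add_apply, hsink, Function.iterate_fixed murtyNext_morris_true]
end

section
/- Let Φ be a 2-up-uniform unique-sink orientation of the n-cube, and let v be a vertex with v_i = 1 and edge v⊕i → v incoming at v in coordinate i. If v_j = 0 and u = v⊕j is an out-neighbor of v, then the edge in coordinate i at u is incoming: u⊕i → u. -/
/-- `Φ` is 2-up-uniform: whenever `u` has `u i = u j = 0` (`i ≠ j`) and `u` is
the source of the 2-dimensional subcube spanned by coordinates `i, j`
(both edges at `u` outgoing), that subcube is uniformly oriented, i.e. its two
upper edges are also directed from the `0`-side to the `1`-side. -/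
def TwoUpUniform {n : ℕ} (Φ : (Fin n → Bool) → Fin n → Bool) : Prop :=
  ∀ (u : Fin n → Bool) (i j : Fin n), i ≠ j →
    u i = false → u j = false →
    Φ u i = false → Φ u j = false →
    Φ (cflip u i) j = false ∧ Φ (cflip u j) i = false

/-- The orientation obtained from `Φ` by reversing all edges. -/
def reverseAll {n : ℕ} (Φ : (Fin n → Bool) → Fin n → Bool) :
    (Fin n → Bool) → Fin n → Bool :=
  fun v i => !(Φ v i)

/-- `Φ` is 2-uniform: both `Φ` and its total reversal are 2-up-uniform. -/
def TwoUniform {n : ℕ} (Φ : (Fin n → Bool) → Fin n → Bool) : Prop :=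
  TwoUpUniform Φ ∧ TwoUpUniform (reverseAll Φ)


lemma cflip_comm {n : ℕ} (v : Fin n → Bool) (i j : Fin n) :
    cflip (cflip v i) j = cflip (cflip v j) i := by
  funext k; simp only [cflip]; split_ifs with h1 h2 <;> simp_all

lemma cflip_self {n : ℕ} (v : Fin n → Bool) (i : Fin n) : cflip v i i = !v i := by
  simp [cflip]

lemma cflip_ne {n : ℕ} (v : Fin n → Bool) {i j : Fin n} (h : j ≠ i) : cflip v i j = v j := by
  simp [cflip, h]

/-- in a 2-up-uniform USO, if `v i = 1` and the coordinate-`i`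
edge at `v` is incoming, then for any out-neighbor `u = v ⊕ j` of `v` with
`v j = 0`, the coordinate-`i` edge at `u` is also incoming. -/
theorem twoUpUniform_plus_persists {n : ℕ} (Φ : (Fin n → Bool) → Fin n → Bool)
    (huso : IsUSO Φ) (huni : TwoUpUniform Φ)
    (v : Fin n → Bool) (i j : Fin n)
    (hvi : v i = true) (hin : Φ v i = true)
    (hvj : v j = false) (hout : Φ v j = false) :
    Φ (cflip v j) i = true := by
  obtain ⟨hcons, hsinks⟩ := huso
  have hij : i ≠ j := by
    intro h; rw [h, hvj] at hvi; exact Bool.false_ne_true hvi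
  by_contra hcontra
  have h' : Φ (cflip v j) i = false := Bool.not_eq_true _ ▸ (by simpa using hcontra)
  set u0 : Fin n → Bool := cflip v i with hu0
  set u' : Fin n → Bool := cflip v j with hu'
  set w : Fin n → Bool := cflip u0 j with hw
  have hu0i : Φ u0 i = false := by
    have := hcons v i
    rw [hin] at this
    simpa using this
  have hwi : Φ w i = true := by
    have := hcons u' i
    rw [h'] at this
    rw [hw, hu0, cflip_comm]
    simpa using this
  have hu0ival : u0 i = false := by rw [hu0, cflip_self, hvi]; rfl
  have hu0jval : u0 j = false := by rw [hu0, cflip_ne _ (Ne.symm hij), hvj]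
  cases hb : Φ u0 j with
  | false =>
    have := (huni u0 i j hij hu0ival hu0jval hu0i hb).2
    rw [← hw] at this
    rw [this] at hwi
    exact Bool.false_ne_true hwi
  | true =>
    have hwj : Φ w j = false := by
      have := hcons u0 j
      rw [hb, ← hw] at this
      simpa using this
    obtain ⟨w', ⟨hsub, hsink⟩, -⟩ := hsinks v {i, j}
    have hi' : Φ w' i = true := hsink i (by simp)
    have hj' : Φ w' j = true := hsink j (by simp)
    have key : ∀ z : Fin n → Bool, w' i = z i → w' j = z j →
        (∀ k, k ≠ i → k ≠ j → z k = v k) → w' = z := by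
      intro z h1 h2 h3
      funext k
      by_cases hk1 : k = i
      · subst hk1; exact h1
      by_cases hk2 : k = j
      · subst hk2; exact h2
      rw [hsub k (by simp [hk1, hk2]), h3 k hk1 hk2]
    cases hwi' : w' i with
    | true =>
      cases hwj' : w' j with
      | false =>
        have : w' = v := key v (hwi'.trans hvi.symm) (hwj'.trans hvj.symm)
          (fun k _ _ => rfl)
        rw [this, hout] at hj'
        exact Bool.false_ne_true hj'
      | true =>
        have : w' = u' := key u'
          (by rw [hu', cflip_ne _ hij, hwi', hvi])
          (by rw [hu', cflip_self, hvj, hwj']; rfl)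
          (fun k _ hk2 => by rw [hu', cflip_ne _ hk2])
        rw [this, h'] at hi'
        exact Bool.false_ne_true hi'
    | false =>
      cases hwj' : w' j with
      | false =>
        have : w' = u0 := key u0 (hwi'.trans hu0ival.symm) (hwj'.trans hu0jval.symm)
          (fun k hk1 _ => by rw [hu0, cflip_ne _ hk1])
        rw [this, hu0i] at hi'
        exact Bool.false_ne_true hi'
      | true =>
        have : w' = w := key w
          (by rw [hw, cflip_ne _ hij, hu0ival, hwi'])
          (by rw [hw, cflip_self, hu0jval, hwj']; rfl)
          (fun k hk1 hk2 => by rw [hw, cflip_ne _ hk2, hu0, cflip_ne _ hk1])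
        rw [this, hwj] at hj'
        exact Bool.false_ne_true hj'
end
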